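/- arXiv:2312.08504 — 2 statements merged into one kernel-verified Lean document; each statement's English description precedes it below -/
import Mathlib

section
/- Let M be a finite set, v : 2^M → ℝ≥0 a valuation with v(∅) = 0 that is monotone (v(S) ≤ v(T) whenever S ⊆ T), b ∈ (0,1], n ≥ 1 an integer, and let β satisfy 0 < β ≤ APS(v, b). Define v̂ : 2^M → ℝ≥0 by v̂(S) := min( n·b, (n·b/β)·v(S) ). Then there exist finitely many sets S_1, …, S_h ⊆ M and weights α_1, …, α_h > 0 such that ∑_{r=1}^h α_r = 1, for every j ∈ M one has ∑_{r : j ∈ S_r} α_r ≤ b, and v̂(S_r) = n·b for every r ∈ {1,…,h}. -/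
/-!
By the definition of the AnyPrice Share, every price vector `p` leaves some bundle of price at
most `b` and value at least `β`. Von Neumann's minimax theorem for the zero-sum game in which
one player picks such a bundle and the other a good (payoff: whether the good lies in the bundle)
turns this into a probability distribution on bundles of value `≥ β` under which every good is
used with probability at most `b`. Its support gives the sets `S_r`, and `v(S_r) ≥ β` makes the
truncation `v̂(S_r)` equal to `n·b`.
-/

open Finset

/-- The AnyPrice Share of a valuation `v` on the goods `G` with entitlement `b`:
the infimum over price vectors `p ≥ 0` summing to `1` of the maximum value of a
bundle of total price at most `b`. -/
noncomputable def APS {G : Type*} [Fintype G] [DecidableEq G]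
    (v : Finset G → ℝ) (b : ℝ) : ℝ :=
  sInf { x : ℝ | ∃ p : G → ℝ, (∀ j, 0 ≤ p j) ∧ (∑ j, p j) = 1 ∧
    x = sSup { y : ℝ | ∃ S : Finset G, (∑ j ∈ S, p j) ≤ b ∧ y = v S } }

open Matrix

section Minimax

variable {ι G : Type*} [Fintype ι] [Fintype G]

lemma quasilinearOn_dotProduct_left (c : ι → ℝ) {s : Set (ι → ℝ)} (hs : Convex ℝ s) :
    QuasilinearOn ℝ s (· ⬝ᵥ c) :=
  ⟨((dotProductBilin ℝ ℝ).flip c).convexOn hs |>.quasiconvexOn,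
    ((dotProductBilin ℝ ℝ).flip c).concaveOn hs |>.quasiconcaveOn⟩

theorem Matrix.exists_mem_stdSimplex_vecMul_le [Nonempty G]
    (A : Matrix ι G ℝ) (b : ℝ) (h : ∀ p ∈ stdSimplex ℝ G, ∃ i, (A *ᵥ p) i ≤ b) :
    ∃ α ∈ stdSimplex ℝ ι, ∀ j, (α ᵥ* A) j ≤ b := by
  classical
  obtain ⟨i₀, -⟩ := h _ (single_mem_stdSimplex ℝ (Classical.arbitrary G))
  have hcont : ∀ α : ι → ℝ, Continuous fun p => α ⬝ᵥ (A *ᵥ p) := fun α => by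
    simp_rw [dotProduct_mulVec]
    exact continuous_const.dotProduct continuous_id
  have hlin : ∀ α : ι → ℝ, QuasilinearOn ℝ (stdSimplex ℝ G) fun p => α ⬝ᵥ (A *ᵥ p) := fun α => by
    simp_rw [dotProduct_mulVec, dotProduct_comm (α ᵥ* A)]
    exact quasilinearOn_dotProduct_left _ (convex_stdSimplex ℝ G)
  -- A saddle point of the bilinear payoff `α ⬝ᵥ A p` on the two simplices (Sion), tested
  -- against vertices.
  obtain ⟨α, hα, p, hp, hsaddle⟩ :=
    Sion.exists_isSaddlePointOn (f := fun α p => α ⬝ᵥ (A *ᵥ p))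
      ⟨_, single_mem_stdSimplex ℝ i₀⟩ (convex_stdSimplex ℝ ι) (isCompact_stdSimplex ℝ ι)
      (fun p _ => (continuous_id.dotProduct continuous_const).continuousOn.lowerSemicontinuousOn)
      (fun p _ => (quasilinearOn_dotProduct_left _ (convex_stdSimplex ℝ ι)).1)
      (convex_stdSimplex ℝ G) ⟨_, single_mem_stdSimplex ℝ (Classical.arbitrary G)⟩
      (isCompact_stdSimplex ℝ G)
      (fun α _ => (hcont α).continuousOn.upperSemicontinuousOn) (fun α _ => (hlin α).2)
  obtain ⟨i, hi⟩ := h p hp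
  refine ⟨α, hα, fun j => ?_⟩
  calc (α ᵥ* A) j = α ⬝ᵥ (A *ᵥ Pi.single j 1) := by
        rw [dotProduct_mulVec, dotProduct_single, mul_one]
    _ ≤ Pi.single i 1 ⬝ᵥ (A *ᵥ p) :=
        hsaddle _ (single_mem_stdSimplex ℝ i) _ (single_mem_stdSimplex ℝ j)
    _ ≤ b := by rwa [single_dotProduct, one_mul]

end Minimax

theorem exists_fractional_cover {ι G : Type*} [Fintype ι] [Fintype G] [DecidableEq G]
    [Nonempty G] (S : ι → Finset G) (b : ℝ)
    (h : ∀ p ∈ stdSimplex ℝ G, ∃ i, ∑ j ∈ S i, p j ≤ b) :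
    ∃ α ∈ stdSimplex ℝ ι, ∀ j, ∑ i with j ∈ S i, α i ≤ b := by
  set A : Matrix ι G ℝ := of fun i j => if j ∈ S i then 1 else 0
  have hmulVec (p : G → ℝ) (i : ι) : (A *ᵥ p) i = ∑ j ∈ S i, p j := by
    simp [A, mulVec, dotProduct, sum_ite_mem]
  have hvecMul (α : ι → ℝ) (j : G) : (α ᵥ* A) j = ∑ i with j ∈ S i, α i := by
    simp [A, vecMul, dotProduct, sum_filter]
  simp_rw [← hmulVec] at h
  simpa only [hvecMul] using exists_mem_stdSimplex_vecMul_le A b h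

theorem exists_fin_enum_of_pos_support {ι : Type*} [Fintype ι] (α : ι → ℝ) (hα : ∀ i, 0 ≤ α i) :
    ∃ (h : ℕ) (e : Fin h → ι), (∀ r, 0 < α (e r)) ∧
      ∀ (P : ι → Prop) [DecidablePred P], ∑ r with P (e r), α (e r) = ∑ i with P i, α i := by
  classical
  set T := univ.filter fun i => 0 < α i
  refine ⟨T.card, fun r => T.equivFin.symm r, fun r => (mem_filter.1 (T.equivFin.symm r).2).2,
    fun P _ => ?_⟩
  rw [sum_filter, sum_filter, Equiv.sum_comp T.equivFin.symm (fun i => if P i then α i else 0),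
    sum_coe_sort T (fun i => if P i then α i else 0)]
  refine sum_filter_of_ne fun i _ hi => ?_
  exact (hα i).lt_of_ne' fun h0 => hi (by simp [h0])

section APS

variable {G : Type*} [Fintype G] [DecidableEq G] (v : Finset G → ℝ) (b : ℝ)

theorem APS_eq_zero_of_isEmpty [IsEmpty G] : APS v b = 0 := by
  simp [APS]

theorem exists_sum_le_and_le_of_le_APS (hb : 0 ≤ b) {β : ℝ} (hβ : β ≤ APS v b)
    {p : G → ℝ} (hp : p ∈ stdSimplex ℝ G) :
    ∃ S : Finset G, ∑ j ∈ S, p j ≤ b ∧ β ≤ v S := by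
  -- `∅` is always affordable, so each inner `sSup` is a maximum, and at least `v ∅`.
  have hfinite (q : G → ℝ) : {y | ∃ S : Finset G, ∑ j ∈ S, q j ≤ b ∧ y = v S}.Finite :=
    (Set.finite_range v).subset fun _ ⟨S, _, hS⟩ => ⟨S, hS.symm⟩
  have hempty (q : G → ℝ) : v ∅ ∈ {y | ∃ S : Finset G, ∑ j ∈ S, q j ≤ b ∧ y = v S} :=
    ⟨∅, by simpa using hb, rfl⟩
  have hbdd : BddBelow {x : ℝ | ∃ q : G → ℝ, (∀ j, 0 ≤ q j) ∧ (∑ j, q j) = 1 ∧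
      x = sSup {y : ℝ | ∃ S : Finset G, (∑ j ∈ S, q j) ≤ b ∧ y = v S}} := by
    refine ⟨v ∅, ?_⟩
    rintro _ ⟨q, -, -, rfl⟩
    exact le_csSup (hfinite q).bddAbove (hempty q)
  obtain ⟨S, hS, hSv⟩ := (Set.nonempty_of_mem (hempty p)).csSup_mem (hfinite p)
  exact ⟨S, hS, hSv ▸ hβ.trans (csInf_le hbdd ⟨p, hp.1, hp.2, rfl⟩)⟩

end APS

theorem exists_fractional_cover_of_le_APS_general {G : Type*} [Fintype G] [DecidableEq G]
    (v : Finset G → ℝ)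
    (b : ℝ) (hb0 : 0 < b)
    (n : ℕ)
    (β : ℝ) (hβ0 : 0 < β) (hβ : β ≤ APS v b) :
    ∃ (h : ℕ) (S : Fin h → Finset G) (α : Fin h → ℝ),
      (∀ r, 0 < α r) ∧
      (∑ r, α r) = 1 ∧
      (∀ j : G, ∑ r ∈ Finset.univ.filter (fun r : Fin h => j ∈ S r), α r ≤ b) ∧
      (∀ r, min ((n : ℝ) * b) (((n : ℝ) * b / β) * v (S r)) = (n : ℝ) * b) := by
  obtain hG | hG := isEmpty_or_nonempty G
  · linarith [APS_eq_zero_of_isEmpty v b]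
  obtain ⟨α, hα, hcover⟩ := exists_fractional_cover (fun S : {S // β ≤ v S} => S.1) b
    fun p hp => by
      obtain ⟨S, hSp, hSv⟩ := exists_sum_le_and_le_of_le_APS v b hb0.le hβ hp
      exact ⟨⟨S, hSv⟩, hSp⟩
  obtain ⟨h, e, hpos, hmass⟩ := exists_fin_enum_of_pos_support α hα.1
  refine ⟨h, fun r => (e r).1, fun r => α (e r), hpos, ?_, fun j => ?_, fun r => ?_⟩
  · simpa [hα.2] using hmass fun _ => True
  · exact (hmass fun S => j ∈ S.1).trans_le (hcover j)
  · refine min_eq_left ?_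
    rw [div_mul_eq_mul_div, le_div_iff₀ hβ0]
    exact mul_le_mul_of_nonneg_left (e r).2 (by positivity)

/-- For `0 < β ≤ APS(v,b)`, after scaling `v` by `n·b/β` and truncating at `n·b`,
there is a fractional allocation (weights `α_r` on sets `S_r`) that is feasible for
entitlement `b` and is supported on sets of truncated value exactly `n·b`. -/
theorem exists_fractional_cover_of_le_APS {G : Type*} [Fintype G] [DecidableEq G]
    (v : Finset G → ℝ) (hnn : ∀ S, 0 ≤ v S) (hempty : v ∅ = 0)
    (hmono : ∀ S T : Finset G, S ⊆ T → v S ≤ v T)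
    (b : ℝ) (hb0 : 0 < b) (hb1 : b ≤ 1)
    (n : ℕ) (hn : 1 ≤ n)
    (β : ℝ) (hβ0 : 0 < β) (hβ : β ≤ APS v b) :
    ∃ (h : ℕ) (S : Fin h → Finset G) (α : Fin h → ℝ),
      (∀ r, 0 < α r) ∧
      (∑ r, α r) = 1 ∧
      (∀ j : G, ∑ r ∈ Finset.univ.filter (fun r : Fin h => j ∈ S r), α r ≤ b) ∧
      (∀ r, min ((n : ℝ) * b) (((n : ℝ) * b / β) * v (S r)) = (n : ℝ) * b) :=
  exists_fractional_cover_of_le_APS_general v b hb0 n β hβ0 hβ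
end

section
/- Let M be a finite set, v : 2^M → ℝ≥0 a monotone submodular valuation, and c > 0. Let S, A ⊆ M satisfy v(S) ≥ c and v(A) < c/3. Then ∑_{j ∈ S \ A} min( 2c/3, v(j | A) ) ≥ 2c/3. -/
/-!
Capping nonnegative terms at `a ≥ 0` cannot push a sum below `a` unless it was already below `a`,
so the capped sum is at least `min (2c/3) (∑ v(j | A))`. By submodularity the marginals add up to at
least `v(A ∪ S) - v(A) ≥ v(S) - v(A) > 2c/3`.
-/

open Finset

theorem Finset.min_sum_le_sum_min {ι : Type*} (s : Finset ι) (f : ι → ℝ) {a : ℝ} (ha : 0 ≤ a)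
    (hf : ∀ j ∈ s, 0 ≤ f j) :
    min a (∑ j ∈ s, f j) ≤ ∑ j ∈ s, min a (f j) := by
  by_cases hcap : ∃ j ∈ s, a ≤ f j
  · obtain ⟨j, hj, haj⟩ := hcap
    calc min a (∑ j ∈ s, f j) ≤ min a (f j) := by rw [min_eq_left haj]; exact min_le_left _ _
      _ ≤ ∑ j ∈ s, min a (f j) :=
        single_le_sum (fun i hi => le_min ha (hf i hi)) hj
  · push Not at hcap
    rw [sum_congr rfl fun j hj => min_eq_right (hcap j hj).le]
    exact min_le_right _ _

theorem sub_le_sum_marginals {G : Type*} [DecidableEq G] (v : Finset G → ℝ)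
    (hsub : ∀ (S T : Finset G) (j : G), S ⊆ T → v (T ∪ {j}) - v T ≤ v (S ∪ {j}) - v S)
    (A D : Finset G) :
    v (A ∪ D) - v A ≤ ∑ j ∈ D, (v (A ∪ {j}) - v A) := by
  induction D using Finset.induction with
  | empty => simp
  | insert j D hj ih =>
    have hstep := hsub A (A ∪ D) j subset_union_left
    rw [sum_insert hj, union_insert, insert_eq, union_comm {j}]
    linarith

theorem sum_capped_marginals_over_set_general
    {G : Type*} [DecidableEq G]
    (v : Finset G → ℝ)
    (hmono : ∀ S T : Finset G, S ⊆ T → v S ≤ v T)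
    (hsub : ∀ (S T : Finset G) (j : G), S ⊆ T →
      v (T ∪ {j}) - v T ≤ v (S ∪ {j}) - v S)
    (c : ℝ) (hc : 0 < c)
    (S A : Finset G) (hS : v S ≥ c) (hA : v A < c / 3) :
    (∑ j ∈ S \ A, min (2 * c / 3) (v (A ∪ {j}) - v A)) ≥ 2 * c / 3 := by
  have hmarg : ∀ j ∈ S \ A, 0 ≤ v (A ∪ {j}) - v A := fun j _ =>
    sub_nonneg.mpr (hmono A (A ∪ {j}) subset_union_left)
  have hgain : 2 * c / 3 ≤ ∑ j ∈ S \ A, (v (A ∪ {j}) - v A) := by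
    have hbound := sub_le_sum_marginals v hsub A (S \ A)
    rw [union_sdiff_self_eq_union] at hbound
    have := hmono S (A ∪ S) subset_union_right
    linarith
  calc 2 * c / 3 = min (2 * c / 3) (∑ j ∈ S \ A, (v (A ∪ {j}) - v A)) := (min_eq_left hgain).symm
    _ ≤ _ := min_sum_le_sum_min _ _ (by positivity) hmarg

/-- For a monotone submodular valuation, if `v S ≥ c` and `v A < c/3`, then the sum
over `j ∈ S \ A` of the marginals `v(j | A)` capped at `2c/3` is at least `2c/3`. -/
theorem sum_capped_marginals_over_set
    {G : Type*} [Fintype G] [DecidableEq G]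
    (v : Finset G → ℝ) (hnn : ∀ S, 0 ≤ v S) (hempty : v ∅ = 0)
    (hmono : ∀ S T : Finset G, S ⊆ T → v S ≤ v T)
    (hsub : ∀ (S T : Finset G) (j : G), S ⊆ T →
      v (T ∪ {j}) - v T ≤ v (S ∪ {j}) - v S)
    (c : ℝ) (hc : 0 < c)
    (S A : Finset G) (hS : v S ≥ c) (hA : v A < c / 3) :
    (∑ j ∈ S \ A, min (2 * c / 3) (v (A ∪ {j}) - v A)) ≥ 2 * c / 3 :=
  sum_capped_marginals_over_set_general v hmono hsub c hc S A hS hA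
end
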